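/- arXiv:1809.00078 — 8 statements merged into one kernel-verified Lean document; each statement's English description precedes it below -/
import Mathlib

section
/- Let G be a countable group, Σ a nonempty finite alphabet, and X ⊆ Σ^G a G-subshift satisfying topological strong spatial mixing (TSSM). Then X is strongly irreducible and X is a subshift of finite type. -/
open scoped Pointwise

namespace TSSMStmt

variable {G : Type*} [Group G] [Countable G] [DecidableEq G]
variable {S : Type*} [Fintype S] [Nonempty S] [TopologicalSpace S] [DiscreteTopology S]

/-- The translation action of `G` on configurations: `(g • x)_k = x_{g⁻¹ k}`. -/
def shift (g : G) (x : G → S) : G → S := fun k => x (g⁻¹ * k)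

/-- A `G`-subshift: a closed, translation-invariant subset of `Σ^G`. -/
def IsSubshift (X : Set (G → S)) : Prop :=
  IsClosed X ∧ ∀ g : G, ∀ x ∈ X, shift g x ∈ X

/-- A subshift of finite type: defined by a finite set `F ⊆ G` and a set `𝔉` of
forbidden patterns on `F`; `x ∈ X` iff `(g⁻¹·x)_F ∉ 𝔉` for all `g ∈ G`. -/
def IsSFT (X : Set (G → S)) : Prop :=
  ∃ (F : Finset G) (Bad : Set (F → S)),
    X = {x : G → S | ∀ g : G, (fun f : F => x (g * f)) ∉ Bad}

/-- Strong irreducibility: there is a finite `F ⊆ G` such that for all finite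
`A, B ⊆ G` with `AF ∩ BF = ∅`, patterns of `X` on `A` and on `B` can be glued in
a single point of `X`. -/
def StronglyIrreducible (X : Set (G → S)) : Prop :=
  ∃ F : Finset G, ∀ A B : Finset G, Disjoint (A * F) (B * F) →
    ∀ x ∈ X, ∀ y ∈ X, ∃ z ∈ X, (∀ g ∈ A, z g = x g) ∧ (∀ g ∈ B, z g = y g)

/-- Topological strong spatial mixing: there is a finite `F ⊆ G` such that for
pairwise disjoint finite `A, B, C ⊆ G` with `AF ∩ BF = ∅`, and patterns
`u ∈ L_A(X)`, `v ∈ L_B(X)`, `w ∈ L_C(X)` with `u∨w, v∨w ∈ L(X)` — encoded by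
configurations `x, y ∈ X` realizing `u∨w` and `v∨w` with a common `w = x_C = y_C` —
there is `z ∈ X` realizing `u∨v∨w`. -/
def TSSM (X : Set (G → S)) : Prop :=
  ∃ F : Finset G, ∀ A B C : Finset G,
    Disjoint A B → Disjoint A C → Disjoint B C → Disjoint (A * F) (B * F) →
    ∀ x ∈ X, ∀ y ∈ X, (∀ s ∈ C, x s = y s) →
      ∃ z ∈ X, (∀ g ∈ A ∪ C, z g = x g) ∧ (∀ g ∈ B, z g = y g)

lemma mem_of_finite_approx (X : Set (G → S)) (hcl : IsClosed X) (x : G → S)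
    (h : ∀ A : Finset G, ∃ y ∈ X, ∀ a ∈ A, y a = x a) : x ∈ X := by
  rw [← hcl.closure_eq, mem_closure_iff_nhds]
  intro U hU
  rw [nhds_pi, Filter.mem_pi] at hU
  obtain ⟨I, hIfin, t, ht, hsub⟩ := hU
  obtain ⟨y, hyX, hy⟩ := h hIfin.toFinset
  refine ⟨y, hsub fun i hi => ?_, hyX⟩
  have h1 := ht i
  rw [nhds_discrete, Filter.mem_pure] at h1
  rw [hy i (hIfin.mem_toFinset.mpr hi)]
  exact h1

/-- **TSSM ⟹ strongly irreducible SFT** (Proposition 2.9). -/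
theorem tssm_implies_SI_and_SFT (X : Set (G → S)) (hX : IsSubshift X)
    (hTSSM : TSSM X) : StronglyIrreducible X ∧ IsSFT X := by
  obtain ⟨F, hF⟩ := hTSSM
  set F' : Finset G := insert 1 F with hF'def
  have hFsub : F ⊆ F' := Finset.subset_insert _ _
  have h1F' : (1 : G) ∈ F' := Finset.mem_insert_self _ _
  have hsubA : ∀ A : Finset G, A ⊆ A * F' := by
    intro A a ha
    simpa using Finset.mul_mem_mul ha h1F'
  have hmono : ∀ A : Finset G, A * F ⊆ A * F' :=
    fun A => Finset.mul_subset_mul_left hFsub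
  constructor
  · -- Strong irreducibility
    refine ⟨F', fun A B hAB x hx y hy => ?_⟩
    have hABd : Disjoint A B := hAB.mono (hsubA A) (hsubA B)
    obtain ⟨z, hzX, h1, h2⟩ :=
      hF A B ∅ hABd (Finset.disjoint_empty_right _) (Finset.disjoint_empty_right _)
        (hAB.mono (hmono A) (hmono B)) x hx y hy (by simp)
    exact ⟨z, hzX, fun g hg => h1 g (by simp [hg]), h2⟩
  · -- SFT
    set W : Finset G := F' * F'⁻¹ with hWdef
    refine ⟨W, {p : W → S | ¬ ∃ y ∈ X, ∀ w : W, y (w : G) = p w}, ?_⟩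
    ext x
    simp only [Set.mem_setOf_eq, not_not]
    constructor
    · intro hx g
      refine ⟨shift g⁻¹ x, hX.2 _ _ hx, fun w => ?_⟩
      simp [shift]
    · intro hloc
      have hloc' : ∀ g : G, ∃ y ∈ X, ∀ w ∈ W, y (g * w) = x (g * w) := by
        intro g
        obtain ⟨y, hyX, hy⟩ := hloc g
        refine ⟨shift g y, hX.2 _ _ hyX, fun w hw => ?_⟩
        have := hy ⟨w, hw⟩
        simpa [shift] using this
      apply mem_of_finite_approx X hX.1
      intro A
      induction A using Finset.strongInductionOn with
      | _ A IH =>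
      by_cases hcase : ∃ a ∈ A, ∃ b ∈ A, Disjoint ({a} * F') ({b} * F')
      · obtain ⟨a, ha, b, hb, hd⟩ := hcase
        have hab : a ≠ b := by
          rintro rfl
          have h1 : a * 1 ∈ ({a} : Finset G) * F' :=
            Finset.mul_mem_mul (Finset.mem_singleton_self a) h1F'
          exact Finset.disjoint_left.mp hd h1 h1
        obtain ⟨x₁, hx₁X, hx₁⟩ := IH (A.erase b) (Finset.erase_ssubset hb)
        obtain ⟨x₂, hx₂X, hx₂⟩ := IH (A.erase a) (Finset.erase_ssubset ha)
        set C : Finset G := (A.erase a).erase b with hCdef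
        have hCa : a ∉ C := fun h => Finset.notMem_erase a A (Finset.mem_of_mem_erase h)
        have hCb : b ∉ C := fun h => Finset.notMem_erase b _ h
        have hdF : Disjoint ({a} * F) ({b} * F) :=
          hd.mono (hmono {a}) (hmono {b})
        have hCagree : ∀ s ∈ C, x₁ s = x₂ s := by
          intro s hs
          have hsa : s ∈ A.erase a := Finset.mem_of_mem_erase hs
          have hsb : s ≠ b := Finset.ne_of_mem_erase hs
          have hsA : s ∈ A.erase b :=
            Finset.mem_erase.mpr ⟨hsb, Finset.mem_of_mem_erase hsa⟩
          rw [hx₁ s hsA, hx₂ s hsa]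
        obtain ⟨z, hzX, hz1, hz2⟩ :=
          hF {a} {b} C (by simp only [Finset.disjoint_singleton]; exact hab) (by simp [hCa]) (by simp [hCb]) hdF
            x₁ hx₁X x₂ hx₂X hCagree
        refine ⟨z, hzX, fun g hg => ?_⟩
        by_cases hgb : g = b
        · subst hgb
          rw [hz2 g (Finset.mem_singleton_self g),
            hx₂ g (Finset.mem_erase.mpr ⟨fun h => hab h.symm, hg⟩)]
        · have hg' : g ∈ A.erase b := Finset.mem_erase.mpr ⟨hgb, hg⟩
          have hgu : g ∈ ({a} : Finset G) ∪ C := by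
            by_cases hga : g = a
            · simp [hga]
            · exact Finset.mem_union_right _
                (Finset.mem_erase.mpr ⟨hgb, Finset.mem_erase.mpr ⟨hga, hg⟩⟩)
          rw [hz1 g hgu, hx₁ g hg']
      · push_neg at hcase
        rcases A.eq_empty_or_nonempty with rfl | ⟨a, ha⟩
        · obtain ⟨y, hyX, _⟩ := hloc' 1
          exact ⟨y, hyX, by simp⟩
        · obtain ⟨y, hyX, hy⟩ := hloc' a
          refine ⟨y, hyX, fun g hg => ?_⟩
          have hnd := hcase a ha g hg
          rw [Finset.not_disjoint_iff] at hnd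
          obtain ⟨c, hc1, hc2⟩ := hnd
          rw [Finset.mem_mul] at hc1 hc2
          obtain ⟨a', ha', f₁, hf₁, hca⟩ := hc1
          obtain ⟨g', hg', f₂, hf₂, hcg⟩ := hc2
          rw [Finset.mem_singleton] at ha' hg'
          rw [ha'] at hca
          rw [hg'] at hcg
          have h1 : a * f₁ = g * f₂ := hca.trans hcg.symm
          have hw : a⁻¹ * g ∈ W := by
            have h2 : a⁻¹ * g = f₁ * f₂⁻¹ := by
              have h3 := congrArg (fun t => a⁻¹ * t * f₂⁻¹) h1
              simpa [mul_assoc] using h3.symm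
            rw [h2, hWdef]
            exact Finset.mul_mem_mul hf₁ (Finset.inv_mem_inv hf₂)
          have := hy (a⁻¹ * g) hw
          simpa using this

end TSSMStmt
end

section
/- Let G be a group and let P, C ⊆ G be subsets with P nonempty and C ⊇ PP⁻¹ := {ab⁻¹ : a, b ∈ P}. Then there exists a set D ⊆ G such that: (packing) dP ∩ d'P = ∅ for every two distinct elements d, d' ∈ D; and (covering) gC ∩ D ≠ ∅ for every g ∈ G. -/
open scoped Pointwise

/-- **Existence of Delone sets** (Lemma 3.3): if `P, C ⊆ G` with `P` nonempty and
`C ⊇ PP⁻¹`, then there is `D ⊆ G` such that the left translates `dP` (`d ∈ D`) are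
pairwise disjoint (packing) and every left translate `gC` meets `D` (covering). -/
theorem exists_delone_set {G : Type*} [Group G] (P C : Set G) (hP : P.Nonempty)
    (hC : P * P⁻¹ ⊆ C) :
    ∃ D : Set G,
      (∀ d ∈ D, ∀ d' ∈ D, d ≠ d' → Disjoint (d • P) (d' • P)) ∧
      ∀ g : G, ((g • C) ∩ D).Nonempty := by
  obtain ⟨p₀, hp₀⟩ := hP
  set S : Set (Set G) :=
    {D | ∀ d ∈ D, ∀ d' ∈ D, d ≠ d' → Disjoint (d • P) (d' • P)} with hS
  have hzorn : ∃ D, Maximal (· ∈ S) D := by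
    apply zorn_subset
    intro c hc hchain
    refine ⟨⋃₀ c, ?_, fun s hs => Set.subset_sUnion_of_mem hs⟩
    intro d hd d' hd' hne
    obtain ⟨s, hs, hds⟩ := hd
    obtain ⟨s', hs', hd's'⟩ := hd'
    rcases hchain.total hs hs' with h | h
    · exact hc hs' d (h hds) d' hd's' hne
    · exact hc hs d hds d' (h hd's') hne
  obtain ⟨D, hDS, hDmax⟩ := hzorn
  refine ⟨D, hDS, fun g => ?_⟩
  by_contra hempty
  rw [Set.not_nonempty_iff_eq_empty] at hempty
  have hgD : g ∉ D := by
    intro hgDmem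
    have : g ∈ g • C ∩ D := ⟨⟨1, hC ⟨p₀, hp₀, p₀⁻¹, Set.inv_mem_inv.2 hp₀, mul_inv_cancel p₀⟩,
      mul_one g⟩, hgDmem⟩
    rw [hempty] at this
    exact this
  have key : ∀ d' ∈ D, Disjoint (g • P) (d' • P) := by
    intro d' hd'
    rw [Set.disjoint_left]
    rintro x ⟨p, hp, rfl⟩ ⟨p', hp', hx⟩
    have heq : d' * p' = g * p := hx
    have : d' ∈ g • C ∩ D := by
      refine ⟨⟨p * p'⁻¹, hC ⟨p, hp, p'⁻¹, Set.inv_mem_inv.2 hp', rfl⟩, ?_⟩, hd'⟩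
      show g * (p * p'⁻¹) = d'
      rw [← mul_assoc, ← heq]
      group
    rw [hempty] at this
    exact this
  have hins : insert g D ∈ S := by
    intro d hd d' hd' hne
    rcases hd with hd | hd
    · rcases hd' with hd' | hd'
      · exact absurd (hd.trans hd'.symm) hne
      · subst hd; exact key d' hd'
    · rcases hd' with hd' | hd'
      · subst hd'; exact (key d hd).symm
      · exact hDS d hd d' hd' hne
  exact hgD (hDmax hins (Set.subset_insert g D) (Set.mem_insert g D))
end

section
/- Let G be a countable group, C ⊆ G a nonempty finite set, and D ⊆ G a set such that gC ∩ D ≠ ∅ for every g ∈ G. Then for every right Følner sequence (F_n) in G, liminf_{n→∞} inf_{g∈G} |gD ∩ F_n| / |F_n| ≥ 1/|C|. -/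
open Filter Topology
open scoped Pointwise

/-- A right Følner sequence in a countable group `G`: a sequence of nonempty finite
subsets `F_n ⊆ G` with `|F_n △ F_n g|/|F_n| → 0` for every `g ∈ G`. -/
def RightFolner {G : Type*} [Group G] [DecidableEq G] (F : ℕ → Finset G) : Prop :=
  (∀ n, (F n).Nonempty) ∧
  ∀ g : G, Tendsto
    (fun n => ((symmDiff (F n) ((F n).image (· * g))).card : ℝ) / (F n).card)
    atTop (𝓝 0)

/-- **Positive uniform lower density of covering sets**: if `C ⊆ G` is finite and
nonempty and every left translate `gC` meets `D ⊆ G`, then along every right Følner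
sequence `(F_n)`, `liminf_n inf_g |gD ∩ F_n|/|F_n| ≥ 1/|C|`. -/
theorem delone_uniform_lower_density {G : Type*} [Group G] [Countable G] [DecidableEq G]
    (C : Finset G) (hC : C.Nonempty) (D : Set G)
    (hcov : ∀ g : G, ((g • (C : Set G)) ∩ D).Nonempty)
    (F : ℕ → Finset G) (hF : RightFolner F) :
    (1 : ℝ) / C.card ≤
      liminf (fun n =>
        ⨅ g : G, (Nat.card ((g • D) ∩ (F n : Set G) : Set G) : ℝ) / (F n).card)
        atTop := by
  classical
  obtain ⟨hne, hten⟩ := hF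
  set u : ℕ → ℝ := fun n =>
      ⨅ g : G, (Nat.card ((g • D) ∩ (F n : Set G) : Set G) : ℝ) / (F n).card with hu
  set ε : ℕ → ℝ := fun n =>
      ∑ c ∈ C, ((symmDiff (F n) ((F n).image (· * c))).card : ℝ) / (F n).card with hε
  set v : ℕ → ℝ := fun n => (1 - ε n) / C.card with hv
  have hk : (0 : ℝ) < C.card := by exact_mod_cast hC.card_pos
  have hfpos : ∀ n, (0 : ℝ) < (F n).card := fun n => by exact_mod_cast (hne n).card_pos
  -- key counting lemma
  have key : ∀ n (g : G), (F n).card ≤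
      C.card * ((F n).filter (fun x => x ∈ g • D)).card
        + ∑ c ∈ C, (symmDiff (F n) ((F n).image (· * c))).card := by
    intro n g
    have hsub : F n ⊆ C.biUnion (fun c => (F n).filter (fun f => f * c ∈ g • D)) := by
      intro f hf
      obtain ⟨y, hyC, hyD⟩ := hcov (g⁻¹ * f)
      obtain ⟨c, hcC, rfl⟩ := hyC
      simp only [Finset.mem_biUnion, Finset.mem_filter]
      refine ⟨c, hcC, hf, ?_⟩
      rw [Set.mem_smul_set_iff_inv_smul_mem]
      simpa [mul_assoc, smul_eq_mul] using hyD
    have step1 : (F n).card ≤ ∑ c ∈ C, ((F n).filter (fun f => f * c ∈ g • D)).card :=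
      le_trans (Finset.card_le_card hsub) (Finset.card_biUnion_le)
    have step2 : ∀ c ∈ C, ((F n).filter (fun f => f * c ∈ g • D)).card ≤
        ((F n).filter (fun x => x ∈ g • D)).card
          + (symmDiff (F n) ((F n).image (· * c))).card := by
      intro c _
      have hinj : Function.Injective (· * c) := fun a b h => by
        simpa using mul_right_cancel h
      have himg : ((F n).filter (fun f => f * c ∈ g • D)).card =
          (((F n).image (· * c)).filter (fun x => x ∈ g • D)).card := by
        rw [Finset.filter_image, Finset.card_image_of_injective _ hinj]
      rw [himg]
      have hsub2 : ((F n).image (· * c)).filter (fun x => x ∈ g • D) ⊆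
          ((F n).filter (fun x => x ∈ g • D)) ∪ symmDiff (F n) ((F n).image (· * c)) := by
        intro x hx
        rw [Finset.mem_filter] at hx
        by_cases hxF : x ∈ F n
        · exact Finset.mem_union_left _ (Finset.mem_filter.2 ⟨hxF, hx.2⟩)
        · refine Finset.mem_union_right _ ?_
          rw [Finset.mem_symmDiff]
          exact Or.inr ⟨hx.1, hxF⟩
      exact le_trans (Finset.card_le_card hsub2) (Finset.card_union_le _ _)
    calc (F n).card ≤ ∑ c ∈ C, ((F n).filter (fun f => f * c ∈ g • D)).card := step1
      _ ≤ ∑ c ∈ C, (((F n).filter (fun x => x ∈ g • D)).card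
            + (symmDiff (F n) ((F n).image (· * c))).card) :=
          Finset.sum_le_sum step2
      _ = C.card * ((F n).filter (fun x => x ∈ g • D)).card
            + ∑ c ∈ C, (symmDiff (F n) ((F n).image (· * c))).card := by
          rw [Finset.sum_add_distrib, Finset.sum_const, smul_eq_mul]
  -- pointwise bound v n ≤ u n
  have hvu : ∀ n, v n ≤ u n := by
    intro n
    refine le_ciInf fun g => ?_
    have hset : ((g • D) ∩ (F n : Set G) : Set G) =
        ↑((F n).filter (fun x => x ∈ g • D)) := by
      ext x; simp [and_comm]
    have hcard : (Nat.card ((g • D) ∩ (F n : Set G) : Set G) : ℝ) =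
        ((F n).filter (fun x => x ∈ g • D)).card := by
      rw [hset, Nat.card_coe_set_eq, Set.ncard_coe_finset]
    have hkey : ((F n).card : ℝ) ≤ C.card * ((F n).filter (fun x => x ∈ g • D)).card
        + ∑ c ∈ C, ((symmDiff (F n) ((F n).image (· * c))).card : ℝ) := by
      exact_mod_cast key n g
    have hεeq : ε n = (∑ c ∈ C, ((symmDiff (F n) ((F n).image (· * c))).card : ℝ))
        / (F n).card := by
      simp [hε, Finset.sum_div]
    rw [hcard]
    simp only [hv]
    rw [hεeq, div_le_div_iff₀ hk (hfpos n), sub_mul,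
      div_mul_cancel₀ _ (hfpos n).ne', one_mul]
    linarith [hkey]
  -- limits
  have hεlim : Tendsto ε atTop (𝓝 0) := by
    have : Tendsto (fun n => ∑ c ∈ C,
        ((symmDiff (F n) ((F n).image (· * c))).card : ℝ) / (F n).card) atTop
        (𝓝 (∑ c ∈ C, (0 : ℝ))) :=
      tendsto_finset_sum _ (fun c _ => hten c)
    simpa [hε] using this
  have hvlim : Tendsto v atTop (𝓝 ((1 : ℝ) / C.card)) := by
    have := ((hεlim.const_sub 1).div_const (C.card : ℝ))
    simpa [hv] using this
  have hliminfv : liminf v atTop = (1 : ℝ) / C.card := hvlim.liminf_eq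
  have hbddv : IsBoundedUnder (· ≥ ·) atTop v := hvlim.isBoundedUnder_ge
  have hbddu : IsCoboundedUnder (· ≥ ·) atTop u := by
    refine IsBoundedUnder.isCoboundedUnder_ge (isBoundedUnder_of ⟨1, fun n => ?_⟩)
    have hle : u n ≤ (Nat.card (((1 : G) • D) ∩ (F n : Set G) : Set G) : ℝ) / (F n).card := by
      refine ciInf_le ⟨0, ?_⟩ (1 : G)
      rintro x ⟨g, rfl⟩
      positivity
    refine hle.trans ?_
    rw [div_le_one (hfpos n)]
    have hsub : (((1 : G) • D) ∩ (F n : Set G) : Set G) ⊆ (F n : Set G) :=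
      Set.inter_subset_right
    have := Set.ncard_le_ncard hsub (F n).finite_toSet
    rw [Nat.card_coe_set_eq]
    exact_mod_cast this.trans_eq (Set.ncard_coe_finset _)
  calc (1 : ℝ) / C.card = liminf v atTop := hliminfv.symm
    _ ≤ liminf u atTop := liminf_le_liminf (Eventually.of_forall hvu) hbddv hbddu
end

section
/- Let G be a countable group and H a finite group, and let X ⊆ H^G be a group shift. Then X satisfies the weak topological Markov property: for every finite A ⊆ G there is a finite B ⊆ G with B ⊇ A such that whenever x, x' ∈ X satisfy x_{B∖A} = x'_{B∖A}, the configuration equal to x on B and to x' on G∖A belongs to X. -/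
namespace GroupShiftTMP

variable {G : Type*} [Group G] [Countable G] [DecidableEq G]
variable {H : Type*} [Group H] [Fintype H] [TopologicalSpace H] [DiscreteTopology H]

/-- The translation action of `G` on configurations: `(g • x)_k = x_{g⁻¹ k}`. -/
def shift (g : G) (x : G → H) : G → H := fun k => x (g⁻¹ * k)

/-- A group shift: a closed, translation-invariant subset of `H^G` that is a
subgroup of `H^G` under pointwise multiplication. -/
def IsGroupShift (X : Set (G → H)) : Prop :=
  IsClosed X ∧ (∀ g : G, ∀ x ∈ X, shift g x ∈ X) ∧
    (1 : G → H) ∈ X ∧ (∀ x ∈ X, ∀ y ∈ X, x * y ∈ X) ∧ ∀ x ∈ X, x⁻¹ ∈ X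

/-- In a product of discrete spaces, a point approximated on every finite set by
elements of a closed set belongs to that set. -/
lemma mem_of_closed_of_finite_approx {X : Set (G → H)} (hX : IsClosed X)
    (y : G → H) (h : ∀ C : Finset G, ∃ z ∈ X, ∀ g ∈ C, z g = y g) : y ∈ X := by
  rw [← hX.closure_eq, mem_closure_iff_nhds]
  intro U hU
  rw [nhds_pi, Filter.mem_pi] at hU
  obtain ⟨I, hI, V, hV, hVU⟩ := hU
  obtain ⟨z, hzX, hz⟩ := h hI.toFinset
  refine ⟨z, hVU ?_, hzX⟩
  intro i hi
  have h1 : z i = y i := hz i (hI.mem_toFinset.mpr hi)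
  have h2 := hV i
  rw [nhds_discrete, Filter.mem_pure] at h2
  rw [h1]; exact h2

/-- **Group shifts have the weak topological Markov property**
(Proposition 5.1): for every finite `A ⊆ G` there is a finite `B ⊇ A` such that
whenever `x, x' ∈ X` agree on `B∖A`, the configuration equal to `x` on `B` and to
`x'` on `G∖A` belongs to `X`. -/
theorem groupShift_weakTMP (X : Set (G → H)) (hX : IsGroupShift X) :
    ∀ A : Finset G, ∃ B : Finset G, A ⊆ B ∧
      ∀ x ∈ X, ∀ x' ∈ X, (∀ g ∈ B \ A, x g = x' g) →
        (fun g => if g ∈ B then x g else x' g) ∈ X := by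
  classical
  obtain ⟨hclosed, _hshift, _hone, hmul, hinv⟩ := hX
  intro A
  let r : (G → H) → (∀ _ : A, H) := fun z a => z a
  let Y : Finset G → Set (∀ _ : A, H) :=
    fun C => r '' {z | z ∈ X ∧ ∀ g ∈ C \ A, z g = 1}
  have Ymono : ∀ {C C' : Finset G}, C ⊆ C' → Y C' ⊆ Y C := by
    intro C C' hCC'
    apply Set.image_mono
    rintro z ⟨hzX, hz1⟩
    exact ⟨hzX, fun g hg => hz1 g (Finset.sdiff_subset_sdiff hCC' (le_refl A) hg)⟩
  have hne : {n | ∃ C : Finset G, A ⊆ C ∧ (Y C).ncard = n}.Nonempty :=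
    ⟨(Y A).ncard, A, Finset.Subset.refl A, rfl⟩
  obtain ⟨B, hAB, hBcard⟩ := Nat.sInf_mem hne
  refine ⟨B, hAB, ?_⟩
  intro x hx x' hx' hagree
  have hstab : ∀ C : Finset G, B ⊆ C → Y C = Y B := by
    intro C hBC
    refine Set.eq_of_subset_of_ncard_le (Ymono hBC) ?_ (Set.toFinite _)
    rw [hBcard]
    exact Nat.sInf_le ⟨C, hAB.trans hBC, rfl⟩
  apply mem_of_closed_of_finite_approx hclosed
  intro C
  set d : G → H := x⁻¹ * x' with hd
  have hdX : d ∈ X := hmul _ (hinv x hx) _ hx'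
  have hdB : ∀ g ∈ B \ A, d g = 1 := by
    intro g hg
    simp [hd, Pi.mul_apply, Pi.inv_apply, hagree g hg]
  have hdY : r d ∈ Y (C ∪ B) := by
    rw [hstab (C ∪ B) Finset.subset_union_right]
    exact ⟨d, ⟨hdX, hdB⟩, rfl⟩
  obtain ⟨w, ⟨hwX, hw1⟩, hwr⟩ := hdY
  refine ⟨x * (d * w⁻¹), hmul _ hx _ (hmul _ hdX _ (hinv _ hwX)), ?_⟩
  intro g hgC
  by_cases hgB : g ∈ B
  · simp only [if_pos hgB]
    by_cases hgA : g ∈ A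
    · have hwd : w g = d g := congrFun hwr ⟨g, hgA⟩
      simp [Pi.mul_apply, Pi.inv_apply, hwd]
    · have h1 : d g = 1 := hdB g (Finset.mem_sdiff.mpr ⟨hgB, hgA⟩)
      have h2 : w g = 1 :=
        hw1 g (Finset.mem_sdiff.mpr ⟨Finset.mem_union_right _ hgB, hgA⟩)
      simp [Pi.mul_apply, Pi.inv_apply, h1, h2]
  · simp only [if_neg hgB]
    have hgA : g ∉ A := fun h => hgB (hAB h)
    have h2 : w g = 1 :=
      hw1 g (Finset.mem_sdiff.mpr ⟨Finset.mem_union_left _ hgC, hgA⟩)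
    simp [hd, Pi.mul_apply, Pi.inv_apply, h2]

end GroupShiftTMP
end

section
/- Let G be a countable group, H a finite group, and X ⊆ H^G a group shift. For a Borel probability measure μ on X the following are equivalent: (i) μ is almost Haar; (ii) μ is a Gibbs measure for the zero interaction, i.e., for every finite A ⊆ G, every u ∈ H^A, and every Borel set W ⊆ X belonging to the σ-algebra generated by x ↦ x_{G∖A}, one has μ([u] ∩ W) = ∫_W (1{x_{G∖A}∨u ∈ X} / N_A(x)) dμ(x), where N_A(x) := #{u' ∈ H^A : x_{G∖A}∨u' ∈ X} (note N_A(x) ≥ 1 for every x ∈ X), [u] := {x ∈ X : x_A = u}, and x_{G∖A}∨u denotes the configuration equal to u on A and to x on G∖A. -/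
set_option linter.unusedSectionVars false

open MeasureTheory Set
open scoped ENNReal

namespace GroupShiftGibbs

variable {G : Type*} [Group G] [Countable G] [DecidableEq G]
variable {H : Type*} [Group H] [Fintype H] [TopologicalSpace H] [DiscreteTopology H]
  [MeasurableSpace H] [MeasurableSingletonClass H]

/-- The translation action of `G` on configurations: `(g • x)_k = x_{g⁻¹ k}`. -/
def shift (g : G) (x : G → H) : G → H := fun k => x (g⁻¹ * k)

/-- A group shift: a closed, translation-invariant subgroup of `H^G`. -/
def IsGroupShift (X : Set (G → H)) : Prop :=
  IsClosed X ∧ (∀ g : G, ∀ x ∈ X, shift g x ∈ X) ∧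
    (1 : G → H) ∈ X ∧ (∀ x ∈ X, ∀ y ∈ X, x * y ∈ X) ∧ ∀ x ∈ X, x⁻¹ ∈ X

/-- A homoclinic point of `X`: a point of `X` whose coordinates differ from the
identity only at finitely many sites. -/
def Homoclinic (X : Set (G → H)) (z : G → H) : Prop :=
  z ∈ X ∧ {g : G | z g ≠ 1}.Finite

/-- `μ` is almost Haar: invariant under left translation by every homoclinic point. -/
def AlmostHaar (X : Set (G → H)) (μ : Measure (G → H)) : Prop :=
  ∀ z : G → H, Homoclinic X z → ∀ U : Set (G → H), MeasurableSet U → U ⊆ X →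
    μ ((fun u => z * u) '' U) = μ U

/-- The configuration `x_{G∖A} ∨ u`: equal to the pattern `u` on `A` and to `x` off `A`. -/
def mergePat (A : Finset G) (x : G → H) (u : A → H) : G → H :=
  fun k => if h : k ∈ A then u ⟨k, h⟩ else x k

open Classical in
/-- `N_A(x)`: the number of patterns `u'` on `A` with `x_{G∖A} ∨ u' ∈ X`. -/
noncomputable def NPat (X : Set (G → H)) (A : Finset G) (x : G → H) : ℕ :=
  Finset.card (Finset.univ.filter (fun u' : A → H => mergePat A x u' ∈ X))

/-- The cylinder `[u] = {x : x_A = u}`. -/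
def cyl (A : Finset G) (u : A → H) : Set (G → H) := {x | ∀ a : A, x a = u a}

/- ### auxiliary lemmas -/

lemma mergePat_mul (A : Finset G) (x y : G → H) (u v : A → H) :
    mergePat A x u * mergePat A y v = mergePat A (x * y) (u * v) := by
  funext k
  by_cases h : k ∈ A <;> simp [mergePat, h]

lemma mergePat_self (A : Finset G) (x : G → H) :
    mergePat A x (fun a : A => x a) = x := by
  funext k
  by_cases h : k ∈ A <;> simp [mergePat, h]

lemma mergePat_one_one (A : Finset G) :
    mergePat A (1 : G → H) (1 : A → H) = 1 := by
  funext k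
  by_cases h : k ∈ A <;> simp [mergePat, h]

lemma mergePat_inv (A : Finset G) (x : G → H) (u : A → H) :
    (mergePat A x u)⁻¹ = mergePat A x⁻¹ u⁻¹ := by
  funext k
  by_cases h : k ∈ A <;> simp [mergePat, h]

lemma mergePat_decomp (A : Finset G) (x : G → H) (v : A → H) :
    mergePat A x v = mergePat A (1 : G → H) (v * (fun a : A => x a)⁻¹) * x := by
  funext k
  by_cases h : k ∈ A <;> simp [mergePat, h]

lemma mergePat_left_decomp (A : Finset G) (x : G → H) (γ u : A → H) :
    mergePat A (1 : G → H) γ * mergePat A x u = mergePat A x (γ * u) := by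
  rw [mergePat_mul, one_mul]

lemma measurable_mergePat (A : Finset G) (u : A → H) :
    Measurable (fun x : G → H => mergePat A x u) := by
  apply measurable_pi_lambda
  intro k
  by_cases h : k ∈ A
  · simpa [mergePat, h] using measurable_const
  · simpa [mergePat, h] using measurable_pi_apply k

lemma measurableSet_cyl (A : Finset G) (u : A → H) : MeasurableSet (cyl A u) := by
  have : cyl A u = ⋂ a : A, (fun x : G → H => x a) ⁻¹' {u a} := by
    ext x; simp [cyl]
  rw [this]
  exact MeasurableSet.iInter fun a => (measurable_pi_apply _) (measurableSet_singleton _)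

lemma cyl_disjoint {A : Finset G} {u v : A → H} (h : u ≠ v) :
    Disjoint (cyl A u) (cyl A v) := by
  rw [Set.disjoint_left]
  intro x hxu hxv
  exact h (funext fun a => (hxu a).symm.trans (hxv a))

open Classical in
/-- The finite set of patterns on `A` extending to homoclinic points of `X`. -/
noncomputable def Gam (X : Set (G → H)) (A : Finset G) : Finset (A → H) :=
  Finset.univ.filter (fun v : A → H => mergePat A (1 : G → H) v ∈ X)

lemma mem_Gam {X : Set (G → H)} {A : Finset G} {v : A → H} :
    v ∈ Gam X A ↔ mergePat A (1 : G → H) v ∈ X := by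
  classical
  simp [Gam]

lemma one_mem_Gam {X : Set (G → H)} (hX : IsGroupShift X) (A : Finset G) :
    (1 : A → H) ∈ Gam X A := by
  rw [mem_Gam, mergePat_one_one]
  exact hX.2.2.1

lemma Gam_card_pos {X : Set (G → H)} (hX : IsGroupShift X) (A : Finset G) :
    0 < (Gam X A).card :=
  Finset.card_pos.2 ⟨1, one_mem_Gam hX A⟩

lemma mul_mem_iff_of_Gam {X : Set (G → H)} (hX : IsGroupShift X) {A : Finset G}
    {γ : A → H} (hγ : γ ∈ Gam X A) {x : G → H} (u : A → H) (hx : x ∈ X) :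
    mergePat A x (γ * u) ∈ X ↔ mergePat A x u ∈ X := by
  rw [← mergePat_left_decomp]
  constructor
  · intro h
    have h2 := hX.2.2.2.1 _ (hX.2.2.2.2 _ (mem_Gam.1 hγ)) _ h
    rwa [inv_mul_cancel_left] at h2
  · intro h
    exact hX.2.2.2.1 _ (mem_Gam.1 hγ) _ h

lemma NPat_eq_card_Gam {X : Set (G → H)} (hX : IsGroupShift X) (A : Finset G)
    {x : G → H} (hx : x ∈ X) : NPat X A x = (Gam X A).card := by
  classical
  unfold NPat
  apply Finset.card_bij' (fun (v : A → H) _ => v * (fun a : A => x a)⁻¹)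
      (fun (γ : A → H) _ => γ * (fun a : A => x a))
  · intro v hv
    rw [Finset.mem_filter] at hv
    rw [mem_Gam]
    have h2 : mergePat A x v * x⁻¹ ∈ X := hX.2.2.2.1 _ hv.2 _ (hX.2.2.2.2 _ hx)
    rwa [mergePat_decomp A x v, mul_inv_cancel_right] at h2
  · intro γ hγ
    rw [mem_Gam] at hγ
    rw [Finset.mem_filter]
    refine ⟨Finset.mem_univ _, ?_⟩
    rw [mergePat_decomp A x (γ * (fun a : A => x a)), mul_inv_cancel_right]
    exact hX.2.2.2.1 _ hγ _ hx
  · intro v _; simp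
  · intro γ _; simp

lemma homoclinic_mergePat_one {X : Set (G → H)} {A : Finset G} {γ : A → H}
    (hγ : γ ∈ Gam X A) : Homoclinic X (mergePat A (1 : G → H) γ) := by
  refine ⟨mem_Gam.1 hγ, Set.Finite.subset A.finite_toSet ?_⟩
  intro k hk
  simp only [Set.mem_setOf_eq] at hk
  by_contra h
  exact hk (by simp [mergePat, fun hh => h (Finset.mem_coe.1 hh), Pi.one_apply,
    dif_neg (fun hh : k ∈ A => h hh)])

lemma mergePat_one_apply_not_mem {A : Finset G} (γ : A → H) {k : G} (hk : k ∉ A) :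
    mergePat A (1 : G → H) γ k = 1 := by
  simp [mergePat, hk]

/-- Translating a set of the form `cyl ∩ X ∩ W` by a homoclinic point supported in `A`. -/
lemma image_mergePat_mul {X : Set (G → H)} (hX : IsGroupShift X) {A : Finset G}
    {γ : A → H} (hγ : γ ∈ Gam X A) (u : A → H) {W : Set (G → H)}
    (hW : ∀ x y : G → H, (∀ k, k ∉ A → x k = y k) → (x ∈ W ↔ y ∈ W)) :
    (fun w => mergePat A (1 : G → H) γ * w) '' (cyl A u ∩ X ∩ W)
      = cyl A (γ * u) ∩ X ∩ W := by
  have hγX : mergePat A (1 : G → H) γ ∈ X := mem_Gam.1 hγ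
  ext y
  constructor
  · rintro ⟨x, ⟨⟨hxu, hxX⟩, hxW⟩, rfl⟩
    refine ⟨⟨fun a => ?_, hX.2.2.2.1 _ hγX _ hxX⟩, ?_⟩
    · simp only [Pi.mul_apply, mergePat, Finset.coe_mem, dif_pos, hxu a]
    · exact (hW _ x (fun k hk => by
        simp [Pi.mul_apply, mergePat_one_apply_not_mem γ hk])).2 hxW
  · rintro ⟨⟨hyu, hyX⟩, hyW⟩
    refine ⟨(mergePat A (1 : G → H) γ)⁻¹ * y, ⟨⟨fun a => ?_, ?_⟩, ?_⟩, by
      simp⟩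
    · have hy := hyu a
      simp only [Pi.mul_apply] at hy
      simp only [Pi.mul_apply, Pi.inv_apply, mergePat, Finset.coe_mem, dif_pos]
      rw [hy]
      exact inv_mul_cancel_left _ _
    · exact hX.2.2.2.1 _ (hX.2.2.2.2 _ hγX) _ hyX
    · exact (hW _ y (fun k hk => by
        simp [Pi.mul_apply, Pi.inv_apply, mergePat_one_apply_not_mem γ hk])).2 hyW

/-- The set of configurations in `X` where pattern `u` can be glued decomposes as a
union of cylinders over `Gam X A`. -/
lemma glue_set_eq_biUnion {X : Set (G → H)} (hX : IsGroupShift X) (A : Finset G)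
    (u : A → H) :
    {x : G → H | mergePat A x u ∈ X} ∩ X = ⋃ γ ∈ Gam X A, (cyl A (γ * u) ∩ X) := by
  ext x
  simp only [Set.mem_inter_iff, Set.mem_setOf_eq, Set.mem_iUnion, exists_prop]
  constructor
  · rintro ⟨hxS, hxX⟩
    refine ⟨(fun a : A => x a) * u⁻¹, ?_, fun a => by simp, hxX⟩
    have h2 : mergePat A x u * x⁻¹ ∈ X := hX.2.2.2.1 _ hxS _ (hX.2.2.2.2 _ hxX)
    rw [mergePat_decomp A x u, mul_inv_cancel_right] at h2
    have h3 := hX.2.2.2.2 _ h2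
    rw [mergePat_inv, inv_one, mul_inv_rev, inv_inv] at h3
    exact mem_Gam.2 h3
  · rintro ⟨γ, hγ, hxc, hxX⟩
    refine ⟨?_, hxX⟩
    have hxA : (fun a : A => x a) = γ * u := funext fun a => hxc a
    have h4 : mergePat A x (γ * u) ∈ X := by
      rw [← hxA, mergePat_self]; exact hxX
    have h5 := hX.2.2.2.1 _ (hX.2.2.2.2 _ (mem_Gam.1 hγ)) _ h4
    rw [mergePat_inv, inv_one, mergePat_left_decomp, ← mul_assoc, inv_mul_cancel,
      one_mul] at h5
    exact h5


open Classical in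
/-- **Almost Haar ≡ uniform Gibbs** (Proposition 5.2): a probability measure on a
group shift is almost Haar iff it is a Gibbs measure for the zero interaction, i.e.
conditioned on the configuration off a finite set `A`, the pattern on `A` is uniform
among the allowed ones. -/
theorem almostHaar_iff_uniform_gibbs (X : Set (G → H)) (hX : IsGroupShift X)
    (μ : Measure (G → H)) [IsProbabilityMeasure μ] (hμX : μ X = 1) :
    AlmostHaar X μ ↔
      ∀ (A : Finset G) (u : A → H) (W : Set (G → H)),
        MeasurableSet[MeasurableSpace.comap
          (fun (x : G → H) (b : ((↑A : Set G)ᶜ : Set G)) => x b) inferInstance] W →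
        (μ (cyl A u ∩ W)).toReal =
          ∫ x in W, (if mergePat A x u ∈ X then (1:ℝ) else 0) / (NPat X A x : ℝ) ∂μ := by
  have hXm : MeasurableSet X := hX.1.measurableSet
  have hXc0 : μ Xᶜ = 0 := by
    rw [measure_compl hXm (measure_ne_top μ X), hμX, measure_univ, tsub_self]
  have hae : ∀ᵐ x ∂μ, x ∈ X := by
    rw [ae_iff]
    exact hXc0
  constructor
  · -- Almost Haar ⇒ Gibbs
    intro hAH A u W hWc
    obtain ⟨V, hV, rfl⟩ := MeasurableSpace.measurableSet_comap.mp hWc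
    set resMap : (G → H) → ((↑A : Set G)ᶜ : Set G) → H :=
      fun x b => x b with hres
    set W : Set (G → H) := resMap ⁻¹' V with hW
    have hWm : MeasurableSet W :=
      (measurable_pi_lambda _ fun b => measurable_pi_apply _) hV
    have hWinv : ∀ x y : G → H, (∀ k, k ∉ A → x k = y k) → (x ∈ W ↔ y ∈ W) := by
      intro x y hxy
      have hres : resMap x = resMap y :=
        funext fun b => hxy b (fun hmem => b.2 (Finset.mem_coe.mpr hmem))
      simp only [hW, Set.mem_preimage, hres]
    set S : Set (G → H) := {x | mergePat A x u ∈ X} with hS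
    have hSm : MeasurableSet S := measurable_mergePat A u hXm
    set N : ℕ := (Gam X A).card with hN
    have hN0 : (N : ℝ) ≠ 0 := Nat.cast_ne_zero.2 (Gam_card_pos hX A).ne'
    -- counting identity
    have hdecomp : S ∩ X ∩ W = ⋃ γ ∈ Gam X A, (cyl A (γ * u) ∩ X ∩ W) := by
      rw [hS, glue_set_eq_biUnion hX A u, Set.iUnion₂_inter]
    have hdisj : (↑(Gam X A) : Set (A → H)).PairwiseDisjoint
        (fun γ => cyl A (γ * u) ∩ X ∩ W) := by
      intro γ _ δ _ hne
      exact ((cyl_disjoint (fun h => hne (mul_right_cancel h))).mono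
        (Set.inter_subset_left.trans Set.inter_subset_left)
        (Set.inter_subset_left.trans Set.inter_subset_left))
    have hterm : ∀ γ ∈ Gam X A, μ (cyl A (γ * u) ∩ X ∩ W) = μ (cyl A u ∩ X ∩ W) := by
      intro γ hγ
      rw [← image_mergePat_mul hX hγ u hWinv]
      exact hAH _ (homoclinic_mergePat_one hγ) _
        (((measurableSet_cyl A u).inter hXm).inter hWm) (fun x hx => hx.1.2)
    have hcount : μ (S ∩ X ∩ W) = (N : ℝ≥0∞) * μ (cyl A u ∩ X ∩ W) := by
      rw [hdecomp, measure_biUnion_finset hdisj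
        (fun γ _ => ((measurableSet_cyl A _).inter hXm).inter hWm),
        Finset.sum_congr rfl hterm, Finset.sum_const, nsmul_eq_mul]
    have hL : μ (cyl A u ∩ W) = μ (cyl A u ∩ X ∩ W) := by
      rw [Set.inter_right_comm]
      exact (measure_inter_conull hXc0).symm
    -- the integral
    have hfg : (fun x => (if mergePat A x u ∈ X then (1:ℝ) else 0) / (NPat X A x : ℝ))
        =ᵐ[μ] (S ∩ X).indicator (fun _ => ((N : ℝ))⁻¹) := by
      filter_upwards [hae] with x hx
      by_cases hxS : mergePat A x u ∈ X
      · rw [if_pos hxS, Set.indicator_of_mem (show x ∈ S ∩ X from ⟨hxS, hx⟩), NPat_eq_card_Gam hX A hx, one_div]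
      · rw [if_neg hxS, Set.indicator_of_notMem (show x ∉ S ∩ X from fun h => hxS h.1), zero_div]
    have hI : ∫ x in W, (if mergePat A x u ∈ X then (1:ℝ) else 0) / (NPat X A x : ℝ) ∂μ
        = (μ (S ∩ X ∩ W)).toReal * (N : ℝ)⁻¹ := by
      rw [integral_congr_ae (ae_restrict_of_ae hfg),
        setIntegral_indicator (hSm.inter hXm), setIntegral_const, smul_eq_mul,
        Set.inter_comm W (S ∩ X), measureReal_def]
    rw [hI, hL, hcount, ENNReal.toReal_mul, ENNReal.toReal_natCast, mul_comm ((N:ℝ)),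
      mul_assoc, mul_comm ((N:ℝ)), inv_mul_cancel₀ hN0, mul_one]
  · -- Gibbs ⇒ Almost Haar
    intro hG z hz U hU hUX
    have hzX := hz.1
    have key : ∀ (A : Finset G) (γ : A → H), γ ∈ Gam X A →
        ∀ u : A → H, μ (cyl A (γ * u) ∩ X) = μ (cyl A u ∩ X) := by
      intro A γ hγ u
      have h1 := hG A u Set.univ MeasurableSet.univ
      have h2 := hG A (γ * u) Set.univ MeasurableSet.univ
      have hint : (∫ x in Set.univ,
            (if mergePat A x (γ * u) ∈ X then (1:ℝ) else 0) / (NPat X A x : ℝ) ∂μ)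
          = ∫ x in Set.univ,
            (if mergePat A x u ∈ X then (1:ℝ) else 0) / (NPat X A x : ℝ) ∂μ := by
        apply integral_congr_ae
        apply ae_restrict_of_ae
        filter_upwards [hae] with x hx
        have hnum : (if mergePat A x (γ * u) ∈ X then (1:ℝ) else 0)
            = (if mergePat A x u ∈ X then (1:ℝ) else 0) := by
          by_cases h : mergePat A x u ∈ X
          · rw [if_pos h, if_pos ((mul_mem_iff_of_Gam hX hγ u hx).2 h)]
          · rw [if_neg h, if_neg fun hh => h ((mul_mem_iff_of_Gam hX hγ u hx).1 hh)]
        rw [hnum]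
      have h3 : μ (cyl A (γ * u) ∩ Set.univ) = μ (cyl A u ∩ Set.univ) :=
        (ENNReal.toReal_eq_toReal_iff' (measure_ne_top μ _) (measure_ne_top μ _)).1
          (h2.trans (hint.trans h1.symm))
      rw [Set.inter_univ, Set.inter_univ] at h3
      calc μ (cyl A (γ * u) ∩ X) = μ (cyl A (γ * u)) := measure_inter_conull hXc0
        _ = μ (cyl A u) := h3
        _ = μ (cyl A u ∩ X) := (measure_inter_conull hXc0).symm
    have hF : Measurable (fun y : G → H => z⁻¹ * y) := by
      apply measurable_pi_lambda
      intro k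
      exact (measurable_of_countable (fun h : H => z⁻¹ k * h)).comp (measurable_pi_apply k)
    have hpre : ∀ C : Set (G → H), MeasurableSet C →
        Measure.map (fun y : G → H => z⁻¹ * y) (μ.restrict X) C
          = μ ((fun y : G → H => z⁻¹ * y) ⁻¹' C ∩ X) := by
      intro C hC
      rw [Measure.map_apply hF hC, Measure.restrict_apply (hF hC)]
    have hcylcase : ∀ s : Finset G, ∀ S : Set ((i : s) → H), MeasurableSet S →
        μ ((fun y : G → H => z⁻¹ * y) ⁻¹' cylinder s S ∩ X) = μ (cylinder s S ∩ X) := by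
      intro s S hSmeas
      classical
      set B : Finset G := s ∪ hz.2.toFinset with hB
      have hsB : s ⊆ B := Finset.subset_union_left
      have hzB : ∀ k, k ∉ B → z k = 1 := by
        intro k hk
        by_contra h
        exact hk (Finset.mem_union_right _ (hz.2.mem_toFinset.2 h))
      have hzBmerge : mergePat B (1 : G → H) (fun b : B => z b) = z := by
        funext k
        by_cases h : k ∈ B
        · simp [mergePat, h]
        · simp [mergePat, h, hzB k h]
      have hzBGam : (fun b : B => z b) ∈ Gam X B :=
        mem_Gam.2 (by rw [hzBmerge]; exact hzX)
      set T : Finset (B → H) := Finset.univ.filter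
        (fun v : B → H => (fun i : s => v ⟨i.1, hsB i.2⟩) ∈ S) with hT
      have hdec : cylinder s S = ⋃ v ∈ T, cyl B v := by
        ext x
        simp only [mem_cylinder, Set.mem_iUnion, exists_prop, hT, Finset.mem_filter,
          Finset.mem_univ, true_and]
        constructor
        · intro hx
          exact ⟨fun b : B => x b, hx, fun a => rfl⟩
        · rintro ⟨v, hv, hxv⟩
          have hxe : (s.restrict x) = fun i : s => v ⟨i.1, hsB i.2⟩ :=
            funext fun i => hxv ⟨i.1, hsB i.2⟩
          rw [hxe]
          exact hv
      have hprecyl : ∀ v : B → H,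
          (fun y : G → H => z⁻¹ * y) ⁻¹' cyl B v = cyl B ((fun b : B => z b) * v) := by
        intro v
        ext y
        simp only [Set.mem_preimage, cyl, Set.mem_setOf_eq, Pi.mul_apply, Pi.inv_apply]
        exact ⟨fun h a => inv_mul_eq_iff_eq_mul.mp (h a),
          fun h a => inv_mul_eq_iff_eq_mul.mpr (h a)⟩
      have hdisj1 : (↑T : Set (B → H)).PairwiseDisjoint
          (fun v => cyl B ((fun b : B => z b) * v) ∩ X) := by
        intro v _ w _ hvw
        exact ((cyl_disjoint (fun h => hvw (mul_left_cancel h))).mono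
          Set.inter_subset_left Set.inter_subset_left)
      have hdisj2 : (↑T : Set (B → H)).PairwiseDisjoint (fun v => cyl B v ∩ X) := by
        intro v _ w _ hvw
        exact ((cyl_disjoint hvw).mono Set.inter_subset_left Set.inter_subset_left)
      calc μ ((fun y : G → H => z⁻¹ * y) ⁻¹' cylinder s S ∩ X)
          = μ (⋃ v ∈ T, (cyl B ((fun b : B => z b) * v) ∩ X)) := by
            rw [hdec]
            have hpe : (fun y : G → H => z⁻¹ * y) ⁻¹' (⋃ v ∈ T, cyl B v)
                = ⋃ v ∈ T, cyl B ((fun b : B => z b) * v) := by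
              simp only [Set.preimage_iUnion, hprecyl]
            rw [hpe, Set.iUnion₂_inter]
        _ = ∑ v ∈ T, μ (cyl B ((fun b : B => z b) * v) ∩ X) :=
            measure_biUnion_finset hdisj1 (fun v _ => (measurableSet_cyl _ _).inter hXm)
        _ = ∑ v ∈ T, μ (cyl B v ∩ X) :=
            Finset.sum_congr rfl (fun v _ => key B _ hzBGam v)
        _ = μ (⋃ v ∈ T, (cyl B v ∩ X)) :=
            (measure_biUnion_finset hdisj2
              (fun v _ => (measurableSet_cyl _ _).inter hXm)).symm
        _ = μ (cylinder s S ∩ X) := by rw [hdec, Set.iUnion₂_inter]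
    haveI : IsFiniteMeasure (Measure.map (fun y : G → H => z⁻¹ * y) (μ.restrict X)) := by
      constructor
      rw [hpre Set.univ MeasurableSet.univ]
      simp only [Set.preimage_univ, Set.univ_inter]
      exact measure_lt_top μ X
    have hext : Measure.map (fun y : G → H => z⁻¹ * y) (μ.restrict X) = μ.restrict X := by
      refine ext_of_generate_finite (measurableCylinders (fun _ : G => H))
        generateFrom_measurableCylinders.symm isPiSystem_measurableCylinders ?_ ?_
      · intro C hC
        obtain ⟨s, S, hSmeas, rfl⟩ := (mem_measurableCylinders C).1 hC
        rw [hpre _ hSmeas.cylinder, Measure.restrict_apply hSmeas.cylinder]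
        exact hcylcase s S hSmeas
      · rw [hpre _ MeasurableSet.univ, Measure.restrict_apply MeasurableSet.univ]
        simp
    have himg : (fun u => z * u) '' U = (fun y : G → H => z⁻¹ * y) ⁻¹' U := by
      ext y
      simp only [Set.mem_image, Set.mem_preimage]
      constructor
      · rintro ⟨x, hx, rfl⟩
        rwa [inv_mul_cancel_left]
      · intro h
        exact ⟨z⁻¹ * y, h, mul_inv_cancel_left z y⟩
    have hsub : (fun y : G → H => z⁻¹ * y) ⁻¹' U ⊆ X := by
      intro y hy
      have h2 := hX.2.2.2.1 _ hzX _ (hUX hy)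
      rwa [mul_inv_cancel_left] at h2
    calc μ ((fun u => z * u) '' U)
        = μ ((fun y : G → H => z⁻¹ * y) ⁻¹' U ∩ X) := by
          rw [himg, Set.inter_eq_self_of_subset_left hsub]
      _ = Measure.map (fun y : G → H => z⁻¹ * y) (μ.restrict X) U := (hpre U hU).symm
      _ = μ.restrict X U := by rw [hext]
      _ = μ U := by rw [Measure.restrict_apply hU, Set.inter_eq_self_of_subset_left hUX]

end GroupShiftGibbs
end

section
/- Let G be a countable group, Σ a nonempty finite alphabet, H ≤ G a subgroup, and F ⊆ G a finite set whose right cosets Ha (a ∈ F) are pairwise distinct; set S := HF. Let Y ⊆ Σ^G be a G-subshift satisfying the weak topological Markov property. Then for every finite A ⊆ H there exists a finite C ⊆ H with C ⊇ A such that: whenever y, y' ∈ Y satisfy y_{G∖S} = y'_{G∖S} and y_{(C∖A)F} = y'_{(C∖A)F}, the configuration z ∈ Σ^G defined by z = y on CF and z = y' on G∖(AF) (well-defined, since y and y' agree on the overlap (C∖A)F ∪ (G∖S)) belongs to Y. In other words, the relative system induced by Y on the slice S satisfies the weak topological Markov property relative to its environment, with memory sets independent of the environment configuration. -/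
namespace SliceTMP

variable {G : Type*} [Group G] [Countable G] [DecidableEq G]
variable {S : Type*} [Fintype S] [Nonempty S] [TopologicalSpace S] [DiscreteTopology S]

/-- The translation action of `G` on configurations: `(g • x)_k = x_{g⁻¹ k}`. -/
def shift (g : G) (x : G → S) : G → S := fun k => x (g⁻¹ * k)

/-- The `H`-slice `S = HF` determined by a subgroup `H` and a finite set `F` of
coset representatives. -/
def slice (H : Subgroup G) (F : Finset G) : Set G :=
  {s : G | ∃ h ∈ (H : Set G), ∃ f ∈ F, s = h * f}

open Classical in
/-- **Weak TMP passes to slices** (Proposition 6.3): if a `G`-subshift `Y` has the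
weak topological Markov property, then for every finite `A ⊆ H` there is a finite
`C ⊆ H` containing `A` such that whenever `y, y' ∈ Y` agree off the slice `S = HF`
and on `(C∖A)F`, the configuration equal to `y` on `CF` and to `y'` on `G∖(AF)`
belongs to `Y`.  In other words, the relative system induced by `Y` on the slice `S`
has the weak topological Markov property relative to its environment, with memory
sets independent of the environment configuration. -/
theorem slice_weakTMP (H : Subgroup G) (F : Finset G)
    (hF : ∀ a ∈ F, ∀ b ∈ F, a * b⁻¹ ∈ H → a = b)
    (Y : Set (G → S)) (hYclosed : IsClosed Y)
    (hYinv : ∀ g : G, ∀ y ∈ Y, shift g y ∈ Y)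
    (hTMP : ∀ A : Finset G, ∃ B : Finset G, A ⊆ B ∧
      ∀ x ∈ Y, ∀ x' ∈ Y, (∀ g ∈ B \ A, x g = x' g) →
        (fun g => if g ∈ B then x g else x' g) ∈ Y) :
    ∀ A : Finset G, (↑A : Set G) ⊆ (H : Set G) →
      ∃ C : Finset G, (↑C : Set G) ⊆ (H : Set G) ∧ A ⊆ C ∧
        ∀ y ∈ Y, ∀ y' ∈ Y,
          (∀ g : G, g ∉ slice H F → y g = y' g) →
          (∀ c ∈ C \ A, ∀ f ∈ F, y (c * f) = y' (c * f)) →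
          (fun g => if ∃ c ∈ C, ∃ f ∈ F, g = c * f then y g else y' g) ∈ Y := by
  classical
  intro A hA
  open Pointwise in
  obtain ⟨B, hAB, hB⟩ := hTMP (A * F)
  set C : Finset G := A ∪ Finset.image (fun p : G × G => p.1 * p.2⁻¹)
      ((B ×ˢ F).filter (fun p => p.1 * p.2⁻¹ ∈ H)) with hCdef
  have hmemC : ∀ h : G, h ∈ (H : Set G) → ∀ f ∈ F, h * f ∈ B → h ∈ C := by
    intro h hh f hf hB'
    apply Finset.mem_union_right
    refine Finset.mem_image.2 ⟨(h * f, f), Finset.mem_filter.2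
      ⟨Finset.mem_product.2 ⟨hB', hf⟩, by simpa using hh⟩, by group⟩
  refine ⟨C, ?_, Finset.subset_union_left, ?_⟩
  · intro c hc
    rcases Finset.mem_union.1 hc with h | h
    · exact hA h
    · obtain ⟨p, hp, rfl⟩ := Finset.mem_image.1 h
      exact (Finset.mem_filter.1 hp).2
  · intro y hy y' hy' hoff hCA
    have key : ∀ g ∈ B \ (A * F), y g = y' g := by
      intro g hg
      obtain ⟨hgB, hgAF⟩ := Finset.mem_sdiff.1 hg
      by_cases hgS : g ∈ slice H F
      · obtain ⟨h, hh, f, hf, rfl⟩ := hgS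
        have hcC : h ∈ C := hmemC h hh f hf hgB
        have hcA : h ∉ A := fun hhA => hgAF (Finset.mul_mem_mul hhA hf)
        exact hCA h (Finset.mem_sdiff.2 ⟨hcC, hcA⟩) f hf
      · exact hoff _ hgS
    have hw := hB y hy y' hy' key
    convert hw using 1
    funext g
    by_cases h1 : ∃ c ∈ C, ∃ f ∈ F, g = c * f
    · simp only [h1, if_true]
      by_cases h2 : g ∈ B
      · simp [h2]
      · simp only [h2, if_false]
        obtain ⟨c, hc, f, hf, rfl⟩ := h1
        have hcA : c ∉ A := fun hcA => h2 (hAB (Finset.mul_mem_mul hcA hf))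
        exact hCA c (Finset.mem_sdiff.2 ⟨hc, hcA⟩) f hf
    · simp only [h1, if_false]
      by_cases h2 : g ∈ B
      · simp only [h2, if_true]
        refine (hoff g ?_).symm
        rintro ⟨h, hh, f, hf, rfl⟩
        exact h1 ⟨h, hmemC h hh f hf h2, f, hf, rfl⟩
      · simp [h2]

end SliceTMP
end

section
/- Let G be a countable group, Σ and Γ nonempty finite alphabets, X ⊆ Σ^G and Y ⊆ Γ^G G-subshifts, and η : X → Y a surjective sliding block code, i.e., there exist a finite set F ⊆ G and a map M : Σ^F → Γ such that η(x)_g = M((g⁻¹·x)_F) for all x ∈ X and g ∈ G. Assume X satisfies the weak topological Markov property. Then for every finite A ⊆ G there exists a finite B ⊆ G with B ⊇ A such that: whenever x, x' ∈ X satisfy η(x) = η(x') and x_{B∖A} = x'_{B∖A}, the configuration w := x_B ∨ x'_{G∖A} belongs to X and satisfies η(w) = η(x). -/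
namespace FactorTMP

variable {G : Type*} [Group G] [Countable G] [DecidableEq G]
variable {S : Type*} [Fintype S] [Nonempty S] [TopologicalSpace S] [DiscreteTopology S]
variable {Γ : Type*} [Fintype Γ] [Nonempty Γ] [TopologicalSpace Γ] [DiscreteTopology Γ]

/-- The translation action of `G` on configurations: `(g • x)_k = x_{g⁻¹ k}`. -/
def shift {E : Type*} (g : G) (x : G → E) : G → E := fun k => x (g⁻¹ * k)

/-- A `G`-subshift: a closed, translation-invariant set of configurations. -/
def IsSubshift {E : Type*} [TopologicalSpace E] (X : Set (G → E)) : Prop :=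
  IsClosed X ∧ ∀ g : G, ∀ x ∈ X, shift g x ∈ X

/-- The weak topological Markov property. -/
def WeakTMP (X : Set (G → S)) : Prop :=
  ∀ A : Finset G, ∃ B : Finset G, A ⊆ B ∧
    ∀ x ∈ X, ∀ x' ∈ X, (∀ g ∈ B \ A, x g = x' g) →
      (fun g => if g ∈ B then x g else x' g) ∈ X

open scoped Pointwise

/-- **Weak TMP relative to a topological factor** (from the proof of Theorem 4.1):
if `X` has the weak TMP and `η : X → Y` is a surjective sliding block code, then for
every finite `A ⊆ G` there is a finite `B ⊇ A` such that whenever `x, x' ∈ X` satisfy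
`η(x) = η(x')` and agree on `B∖A`, the configuration `w = x_B ∨ x'_{G∖A}` belongs to
`X` and satisfies `η(w) = η(x)`. -/
theorem factor_relative_weakTMP
    (X : Set (G → S)) (hX : IsSubshift X)
    (Y : Set (G → Γ)) (hY : IsSubshift Y)
    (η : (G → S) → (G → Γ)) (F : Finset G) (M : (F → S) → Γ)
    (hblock : ∀ x ∈ X, ∀ g : G, η x g = M (fun f : F => x (g * f)))
    (hinto : ∀ x ∈ X, η x ∈ Y)
    (honto : ∀ y ∈ Y, ∃ x ∈ X, η x = y)
    (hTMP : WeakTMP X) :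
    ∀ A : Finset G, ∃ B : Finset G, A ⊆ B ∧
      ∀ x ∈ X, ∀ x' ∈ X, η x = η x' → (∀ g ∈ B \ A, x g = x' g) →
        (fun g => if g ∈ B then x g else x' g) ∈ X ∧
        η (fun g => if g ∈ B then x g else x' g) = η x := by
  classical
  intro A
  obtain ⟨B, hAB, hB⟩ := hTMP (A ∪ A * F⁻¹ * F)
  refine ⟨B, (Finset.subset_union_left).trans hAB, ?_⟩
  intro x hx x' hx' hfac hagree
  set w : G → S := fun g => if g ∈ B then x g else x' g with hwdef
  have hw : w ∈ X := by
    refine hB x hx x' hx' ?_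
    intro g hg
    rw [Finset.mem_sdiff] at hg
    exact hagree g (Finset.mem_sdiff.mpr ⟨hg.1, fun h => hg.2 (Finset.mem_union_left _ h)⟩)
  refine ⟨hw, funext fun g => ?_⟩
  rw [hblock _ hw g, hblock _ hx g]
  by_cases hc : ∃ f ∈ F, g * f ∈ A
  · -- then g • F ⊆ A * F⁻¹ * F ⊆ B, so w = x on g • F
    obtain ⟨f', hf', hgf'⟩ := hc
    congr 1
    funext f
    have hmem : g * (f : G) ∈ A * F⁻¹ * F := by
      have : g * (f : G) = (g * f') * f'⁻¹ * f := by group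
      rw [this]
      exact Finset.mul_mem_mul (Finset.mul_mem_mul hgf' (Finset.inv_mem_inv hf')) f.2
    have hB' : g * (f : G) ∈ B := hAB (Finset.mem_union_right _ hmem)
    simp [hwdef, hB']
  · -- then g • F ∩ A = ∅, so w = x' on g • F, and η x' g = η x g
    push_neg at hc
    have hx'g : M (fun f : F => w (g * f)) = M (fun f : F => x' (g * f)) := by
      congr 1
      funext f
      by_cases hb : g * (f : G) ∈ B
      · have := hagree (g * f) (Finset.mem_sdiff.mpr ⟨hb, hc f f.2⟩)
        simp [hwdef, hb, this]
      · simp [hwdef, hb]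
    rw [hx'g, ← hblock _ hx' g, ← hfac, hblock _ hx g]

end FactorTMP
end

section
/- Let G be a countable group admitting a right Følner sequence and let A ⊆ G be a finite set with 1_G ∈ A. Let Y := {y ∈ {0,1}^G : for all k, ℓ ∈ G with y_k = y_ℓ = 1, either k = ℓ or kA ∩ ℓA = ∅} be the hard-core shift with shape A. Then there exists a Borel probability measure π on Y that is invariant under the translation action of G and satisfies π({y ∈ Y : y_{1_G} = 1}) > 0. -/
open MeasureTheory Filter Topology

namespace HardCore

variable {G : Type*} [Group G] [Countable G] [DecidableEq G]

/-- The translation action of `G` on configurations: `(g • y)_k = y_{g⁻¹ k}`. -/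
def shift (g : G) (y : G → Bool) : G → Bool := fun k => y (g⁻¹ * k)

/-- A right Følner sequence in a countable group `G`. -/
def RightFolner (F : ℕ → Finset G) : Prop :=
  (∀ n, (F n).Nonempty) ∧
  ∀ g : G, Tendsto
    (fun n => ((symmDiff (F n) ((F n).image (· * g))).card : ℝ) / (F n).card)
    atTop (𝓝 0)

/-- The hard-core shift with shape `A`: configurations of particles (`true`s) whose
translated shapes `kA` do not overlap. -/
def hardCore (A : Finset G) : Set (G → Bool) :=
  {y | ∀ k l : G, y k = true → y l = true →
        k = l ∨ ∀ a ∈ A, ∀ b ∈ A, k * a ≠ l * b}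

/-- The "difference neighborhood" of `g`: the points `g * a * b⁻¹` for `a b ∈ A`,
with `g` itself removed. -/
def nbhd (A : Finset G) (g : G) : Finset G :=
  ((Finset.image₂ (fun a b => a * b⁻¹) A A).image (g * ·)).erase g

lemma mem_nbhd {A : Finset G} {g h : G} :
    h ∈ nbhd A g ↔ h ≠ g ∧ ∃ a ∈ A, ∃ b ∈ A, h = g * (a * b⁻¹) := by
  simp only [nbhd, Finset.mem_erase, Finset.mem_image, Finset.mem_image₂]
  constructor
  · rintro ⟨hne, c, ⟨a, ha, b, hb, rfl⟩, rfl⟩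
    exact ⟨hne, a, ha, b, hb, rfl⟩
  · rintro ⟨hne, a, ha, b, hb, rfl⟩
    exact ⟨hne, a * b⁻¹, ⟨a, ha, b, hb, rfl⟩, rfl⟩

lemma mul_mem_nbhd {A : Finset G} (x g h : G) :
    x * h ∈ nbhd A (x * g) ↔ h ∈ nbhd A g := by
  simp only [mem_nbhd, ne_eq, mul_right_inj, mul_assoc]

/-- The local hard-core rule: keep a particle at `g` iff the coin at `g` is heads and
all coins in the difference neighborhood of `g` are tails. -/
def rule (A : Finset G) (u : G → Bool) : G → Bool :=
  fun g => u g && decide (∀ h ∈ nbhd A g, u h = false)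

lemma rule_mem_hardCore (A : Finset G) (u : G → Bool) : rule A u ∈ hardCore A := by
  intro k l hk hl
  rw [or_iff_not_imp_left]
  intro hkl a ha b hb hab
  have hlk : l = k * (a * b⁻¹) := by
    rw [← mul_assoc]
    exact eq_mul_inv_iff_mul_eq.mpr hab.symm
  have hmem : l ∈ nbhd A k := mem_nbhd.mpr ⟨fun h => hkl h.symm, a, ha, b, hb, hlk⟩
  rw [rule, Bool.and_eq_true, decide_eq_true_iff] at hk hl
  have := hk.2 l hmem
  rw [hl.1] at this
  simp at this

lemma shift_rule (A : Finset G) (x : G) (u : G → Bool) :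
    shift x (rule A u) = rule A (shift x u) := by
  funext g
  show rule A u (x⁻¹ * g) = rule A (shift x u) g
  unfold rule shift
  congr 1
  rw [decide_eq_decide]
  constructor
  · intro H h hh
    exact H _ ((mul_mem_nbhd x⁻¹ g h).mpr hh)
  · intro H h hh
    have : x * h ∈ nbhd A g := by
      have := (mul_mem_nbhd (A := A) x⁻¹ g (x * h)).symm
      rw [inv_mul_cancel_left] at this
      exact this.mpr hh
    have := H _ this
    rwa [inv_mul_cancel_left] at this

lemma continuous_shift (x : G) : Continuous (shift (G := G) x) :=
  continuous_pi fun k => continuous_apply (x⁻¹ * k)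

lemma continuous_rule (A : Finset G) : Continuous (rule (G := G) A) := by
  rw [continuous_pi_iff]
  intro g
  have h1 : Continuous (fun u : G → Bool =>
      (u g, fun h : {x // x ∈ nbhd A g} => u h.1)) :=
    (continuous_apply g).prodMk (continuous_pi fun h => continuous_apply h.1)
  have h2 : Continuous (fun p : Bool × ({x // x ∈ nbhd A g} → Bool) =>
      p.1 && decide (∀ h : {x // x ∈ nbhd A g}, p.2 h = false)) :=
    continuous_of_discreteTopology
  have h3 := h2.comp h1
  convert h3 using 2 with u
  rw [rule]
  congr 1
  rw [decide_eq_decide]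
  exact ⟨fun H h => H h.1 h.2, fun H h hh => H ⟨h, hh⟩⟩

lemma measurableSet_hardCore (A : Finset G) : MeasurableSet (hardCore A) := by
  have : hardCore A = ⋂ (k : G), ⋂ (l : G),
      (fun y : G → Bool => (y k, y l)) ⁻¹'
        {p : Bool × Bool | p.1 = true → p.2 = true →
          k = l ∨ ∀ a ∈ A, ∀ b ∈ A, k * a ≠ l * b} := by
    ext y
    simp only [hardCore, Set.mem_setOf_eq, Set.mem_iInter, Set.mem_preimage]
  rw [this]
  exact MeasurableSet.iInter fun k => MeasurableSet.iInter fun l =>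
    (((measurable_pi_apply k).prodMk (measurable_pi_apply l)))
      (MeasurableSet.of_discrete)

/-- **Existence of an invariant measure with particles for the hard-core shift**
(from the proof of Theorem 7.1): if `G` admits a right Følner sequence and
`1_G ∈ A`, then the hard-core shift with shape `A` carries a translation-invariant
Borel probability measure giving positive probability to a particle at the origin. -/
theorem hardCore_invariant_measure_with_particles
    (hFolner : ∃ F : ℕ → Finset G, RightFolner F)
    (A : Finset G) (hA : (1 : G) ∈ A) :
    ∃ π : Measure (G → Bool), IsProbabilityMeasure π ∧
      π (hardCore A) = 1 ∧
      (∀ g : G, π.map (shift g) = π) ∧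
      0 < π {y | y ∈ hardCore A ∧ y 1 = true} := by
  classical
  set μ0 : Measure (G → Bool) :=
    Measure.addHaarMeasure (⊤ : TopologicalSpace.PositiveCompacts (G → Bool)) with hμ0
  have hprob0 : IsProbabilityMeasure μ0 := by
    constructor
    rw [hμ0, ← TopologicalSpace.PositiveCompacts.coe_top (α := G → Bool)]
    exact Measure.addHaarMeasure_self
  have hHaar : μ0.IsAddHaarMeasure := by
    rw [hμ0]; infer_instance
  -- invariance of the Haar measure under the shifts
  have hinv0 : ∀ x : G, μ0.map (shift x) = μ0 := by
    intro x
    let F : (G → Bool) →+ (G → Bool) := AddMonoidHom.mk' (shift x) (fun u v => rfl)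
    have hcont : Continuous F := continuous_shift x
    have hsurj : Function.Surjective F := by
      intro u
      refine ⟨shift x⁻¹ u, funext fun k => ?_⟩
      show shift x (shift x⁻¹ u) k = u k
      simp [shift, mul_inv_cancel_left]
    exact (AddMonoidHom.measurePreserving (f := F) hcont hsurj rfl).map_eq
  have hrule : Measurable (rule (G := G) A) := (continuous_rule A).measurable
  refine ⟨μ0.map (rule A), Measure.isProbabilityMeasure_map hrule.aemeasurable, ?_, ?_, ?_⟩
  · rw [Measure.map_apply hrule (measurableSet_hardCore A)]
    have : rule A ⁻¹' hardCore A = Set.univ :=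
      Set.eq_univ_of_forall fun u => rule_mem_hardCore A u
    rw [this, measure_univ]
  · intro x
    rw [Measure.map_map (continuous_shift x).measurable hrule]
    have : shift x ∘ rule A = rule A ∘ shift x := funext fun u => shift_rule A x u
    rw [this, ← Measure.map_map hrule (continuous_shift x).measurable, hinv0 x]
  · have hset : MeasurableSet {y : G → Bool | y ∈ hardCore A ∧ y 1 = true} := by
      have : {y : G → Bool | y ∈ hardCore A ∧ y 1 = true}
          = hardCore A ∩ ((fun y : G → Bool => y 1) ⁻¹' {true}) := rfl
      rw [this]
      exact (measurableSet_hardCore A).inter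
        ((measurable_pi_apply 1) (measurableSet_singleton true))
    rw [Measure.map_apply hrule hset]
    have hpre : rule A ⁻¹' {y : G → Bool | y ∈ hardCore A ∧ y 1 = true}
        = (fun u : G → Bool => rule A u 1) ⁻¹' {true} := by
      ext u
      simp only [Set.mem_preimage, Set.mem_setOf_eq, Set.mem_singleton_iff]
      exact ⟨fun h => h.2, fun h => ⟨rule_mem_hardCore A u, h⟩⟩
    rw [hpre]
    have hopen : IsOpen ((fun u : G → Bool => rule A u 1) ⁻¹' {true}) :=
      (isOpen_discrete {true}).preimage ((continuous_apply 1).comp (continuous_rule A))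
    have hne : ((fun u : G → Bool => rule A u 1) ⁻¹' {true}).Nonempty := by
      refine ⟨fun g => decide (g = 1), ?_⟩
      simp only [Set.mem_preimage, Set.mem_singleton_iff, rule, Bool.and_eq_true,
        decide_eq_true_iff]
      exact ⟨by simp, fun h hh => by simp [(mem_nbhd.mp hh).1]⟩
    exact hopen.measure_pos μ0 hne

end HardCore
end
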